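/- Let φ: (M³,g) → (N²,h) be a submersive semi-conformal map with unit vertical field U, and let X₁, X₂ be horizontal lifts of unit vector fields X̄₁, X̄₂ on N. Then (i) the horizontal part of [U, X_a] vanishes for a = 1,2, and (ii) U(g(U, [X₁, X₂])) = −dμ♭(X₁, X₂), where μ is the mean curvature vector of the fibres. -/

import Mathlib

open scoped BigOperators

noncomputable section

/-- Partial derivative of `f` in the `i`-th coordinate direction. -/
def pd {n : ℕ} (f : (Fin n → ℝ) → ℝ) (i : Fin n) (x : Fin n → ℝ) : ℝ :=
  fderiv ℝ f x (Pi.single i 1)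

/-- Pointwise inverse of a metric (the components `g^{ij}`). -/
def ginv {n : ℕ} (g : (Fin n → ℝ) → Matrix (Fin n) (Fin n) ℝ) (x : Fin n → ℝ) :
    Matrix (Fin n) (Fin n) ℝ := (g x)⁻¹

/-- A smooth Riemannian metric in coordinates. -/
def IsMetric {n : ℕ} (g : (Fin n → ℝ) → Matrix (Fin n) (Fin n) ℝ) : Prop :=
  (∀ i j, ContDiff ℝ (⊤ : ℕ∞) fun x => g x i j) ∧ ∀ x, (g x).IsSymm ∧ (g x).PosDef

/-- A smooth vector field (or componentwise-smooth family). -/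
def SmoothVF {n : ℕ} (X : (Fin n → ℝ) → Fin n → ℝ) : Prop :=
  ∀ k, ContDiff ℝ (⊤ : ℕ∞) fun x => X x k

/-- Christoffel symbols `Γ^k_{ij}` of the metric `g`. -/
def christoffel {n : ℕ} (g : (Fin n → ℝ) → Matrix (Fin n) (Fin n) ℝ)
    (k i j : Fin n) (x : Fin n → ℝ) : ℝ :=
  (1 / 2) * ∑ l, ginv g x k l *
    (pd (fun y => g y l j) i x + pd (fun y => g y l i) j x - pd (fun y => g y i j) l x)

/-- Covariant derivative `(∇_X Y)^k` of the Levi-Civita connection of `g`. -/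
def covD {n : ℕ} (g : (Fin n → ℝ) → Matrix (Fin n) (Fin n) ℝ)
    (X Y : (Fin n → ℝ) → Fin n → ℝ) (x : Fin n → ℝ) (k : Fin n) : ℝ :=
  (∑ i, X x i * pd (fun y => Y y k) i x) + ∑ i, ∑ j, christoffel g k i j x * X x i * Y x j

/-- The Lie bracket of vector fields, `[X,Y]^k = X^i ∂_i Y^k - Y^i ∂_i X^k`. -/
def bracket {n : ℕ} (X Y : (Fin n → ℝ) → Fin n → ℝ) (x : Fin n → ℝ) (k : Fin n) : ℝ :=
  ∑ i, (X x i * pd (fun y => Y y k) i x - Y x i * pd (fun y => X y k) i x)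

/-- `φ : (M³,g) → (N²,h)` is semi-conformal with dilation `λ`, in the local-coordinate
characterization `g^{ij} φ^α_i φ^β_j = λ² h^{αβ}`. -/
def SemiConformal (g : (Fin 3 → ℝ) → Matrix (Fin 3) (Fin 3) ℝ)
    (h : (Fin 2 → ℝ) → Matrix (Fin 2) (Fin 2) ℝ)
    (φ : (Fin 3 → ℝ) → Fin 2 → ℝ) (lam : (Fin 3 → ℝ) → ℝ) : Prop :=
  ∀ x α β, (∑ i, ∑ j, ginv g x i j * pd (fun y => φ y α) i x * pd (fun y => φ y β) j x)
    = lam x ^ 2 * ginv h (φ x) α β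

/-- A vector field is vertical when it lies in `ker dφ`. -/
def Vertical (φ : (Fin 3 → ℝ) → Fin 2 → ℝ) (U : (Fin 3 → ℝ) → Fin 3 → ℝ) : Prop :=
  ∀ x α, (∑ i, pd (fun y => φ y α) i x * U x i) = 0

/-- A vector field of unit length for `g`. -/
def UnitField (g : (Fin 3 → ℝ) → Matrix (Fin 3) (Fin 3) ℝ)
    (U : (Fin 3 → ℝ) → Fin 3 → ℝ) : Prop :=
  ∀ x, (∑ i, ∑ j, g x i j * U x i * U x j) = 1

/-- The dual 1-form `X♭ = g(X,·)`. -/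
def flat (g : (Fin 3 → ℝ) → Matrix (Fin 3) (Fin 3) ℝ)
    (X : (Fin 3 → ℝ) → Fin 3 → ℝ) (j : Fin 3) (x : Fin 3 → ℝ) : ℝ :=
  ∑ k, g x j k * X x k

/-- Horizontal projection (relative to the unit vertical field `U`):
`H X = X - g(X,U) U`. -/
def Hproj (g : (Fin 3 → ℝ) → Matrix (Fin 3) (Fin 3) ℝ)
    (U X : (Fin 3 → ℝ) → Fin 3 → ℝ) (x : Fin 3 → ℝ) (k : Fin 3) : ℝ :=
  X x k - (∑ i, ∑ j, g x i j * X x i * U x j) * U x k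

/-- The mean curvature vector `μ = ∇_U U` of the fibres (`U` the unit vertical field). -/
def meanCurv (g : (Fin 3 → ℝ) → Matrix (Fin 3) (Fin 3) ℝ)
    (U : (Fin 3 → ℝ) → Fin 3 → ℝ) (x : Fin 3 → ℝ) (k : Fin 3) : ℝ :=
  covD g U U x k

/-- Lie derivative of the metric: `(L_E g)_{ij} = E^k ∂_k g_{ij} + g_{kj} ∂_i E^k + g_{ik} ∂_j E^k`. -/
def lieD {n : ℕ} (g : (Fin n → ℝ) → Matrix (Fin n) (Fin n) ℝ)
    (E : (Fin n → ℝ) → Fin n → ℝ) (i j : Fin n) (x : Fin n → ℝ) : ℝ :=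
  (∑ k, E x k * pd (fun y => g y i j) k x)
    + (∑ k, g x k j * pd (fun y => E y k) i x)
    + ∑ k, g x i k * pd (fun y => E y k) j x

/-! The bracket of a vertical field with a projectable one is vertical, and since `φ` is a
semi-conformal submersion `M³ → N²`, its vertical space is the line spanned by `U`; hence
`[U, X_a] = θ([U, X_a]) U` with `θ = U♭`, which gives (i).

For (ii), `θ(X_a) = 0` and `θ(U) = 1` turn `dθ(X, Y) = X θ(Y) - Y θ(X) - θ([X, Y])` into
`g(U, [X₁, X₂]) = -dθ(X₁, X₂)` and `θ([U, X_a]) = -dθ(U, X_a)`, while `|U| = 1` gives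
`μ♭ = ι_U dθ`. Cartan's formula `L_U dθ = d ι_U dθ = dμ♭` then yields
`U(dθ(X₁, X₂)) = dμ♭(X₁, X₂) + dθ([U, X₁], X₂) + dθ(X₁, [U, X₂])`, and the last two terms,
`-dθ(U, X₁) dθ(U, X₂)` and `dθ(U, X₂) dθ(U, X₁)`, cancel. -/

open Finset Matrix

local notation "Smooth" => ContDiff ℝ (⊤ : ℕ∞)

section PartialDerivatives

variable {n : ℕ} {f f₁ f₂ : (Fin n → ℝ) → ℝ} {i j : Fin n} {x : Fin n → ℝ}

theorem differentiableAt_of_contDiff (hf : Smooth f) : DifferentiableAt ℝ f x :=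
  (hf.differentiable (by simp)).differentiableAt

theorem pd_add (hf₁ : Smooth f₁) (hf₂ : Smooth f₂) :
    pd (fun y => f₁ y + f₂ y) i x = pd f₁ i x + pd f₂ i x := by
  simp [pd, fderiv_fun_add (differentiableAt_of_contDiff hf₁) (differentiableAt_of_contDiff hf₂)]

theorem pd_sub (hf₁ : Smooth f₁) (hf₂ : Smooth f₂) :
    pd (fun y => f₁ y - f₂ y) i x = pd f₁ i x - pd f₂ i x := by
  simp [pd, fderiv_fun_sub (differentiableAt_of_contDiff hf₁) (differentiableAt_of_contDiff hf₂)]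

theorem pd_neg : pd (fun y => -f y) i x = -pd f i x := by
  simp [pd, fderiv_fun_neg]

theorem pd_mul (hf₁ : Smooth f₁) (hf₂ : Smooth f₂) :
    pd (fun y => f₁ y * f₂ y) i x = pd f₁ i x * f₂ x + f₁ x * pd f₂ i x := by
  simp only [pd, fderiv_fun_mul (differentiableAt_of_contDiff hf₁)
    (differentiableAt_of_contDiff hf₂), _root_.add_apply,
    _root_.smul_apply, smul_eq_mul]
  ring

theorem pd_sum {ι : Type*} {s : Finset ι} {F : ι → (Fin n → ℝ) → ℝ} (hF : ∀ a, Smooth (F a)) :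
    pd (fun y => ∑ a ∈ s, F a y) i x = ∑ a ∈ s, pd (F a) i x := by
  simp [pd, fderiv_fun_sum fun a _ => differentiableAt_of_contDiff (hF a)]

theorem pd_const (c : ℝ) : pd (fun _ => c) i x = 0 := by
  simp [pd]

@[fun_prop]
theorem ContDiff.pd (hf : Smooth f) (i : Fin n) : Smooth (pd f i) :=
  (hf.fderiv_right (by exact_mod_cast le_top)).clm_apply contDiff_const

theorem pd_pd_comm (hf : Smooth f) (i j : Fin n) : pd (pd f i) j x = pd (pd f j) i x := by
  have hDf : Smooth (fderiv ℝ f) := hf.fderiv_right (by exact_mod_cast le_top)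
  have hsymm := second_derivative_symmetric (f' := fderiv ℝ f) (f'' := fderiv ℝ (fderiv ℝ f) x)
    (fun y => (differentiableAt_of_contDiff hf).hasFDerivAt)
    (hDf.differentiable (by simp) x).hasFDerivAt
  have hpd : ∀ a b : Fin n, pd (pd f a) b x
      = fderiv ℝ (fderiv ℝ f) x (Pi.single b 1) (Pi.single a 1) := fun a b => by
    change fderiv ℝ (fun y => fderiv ℝ f y (Pi.single a 1)) x (Pi.single b 1) = _
    rw [fderiv_clm_apply (hDf.differentiable (by simp)).differentiableAt
      (differentiableAt_const _)]
    simp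
  rw [hpd, hpd, hsymm]

theorem pd_comp {m : ℕ} {F : (Fin m → ℝ) → ℝ} {φ : (Fin n → ℝ) → Fin m → ℝ}
    (hF : Smooth F) (hφ : ∀ α, Smooth fun y => φ y α) :
    pd (fun y => F (φ y)) i x = ∑ β, pd F β (φ x) * pd (fun y => φ y β) i x := by
  have hφx : DifferentiableAt ℝ φ x :=
    differentiableAt_pi.2 fun α => differentiableAt_of_contDiff (hφ α)
  have hcoord : ∀ β, fderiv ℝ φ x (Pi.single i 1) β = pd (fun y => φ y β) i x := fun β => by
    rw [fderiv_pi fun α => differentiableAt_of_contDiff (hφ α)]; rfl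
  have hexpand : fderiv ℝ φ x (Pi.single i 1)
      = ∑ β, fderiv ℝ φ x (Pi.single i 1) β • (Pi.single β 1 : Fin m → ℝ) := by
    ext γ; simp [Finset.sum_apply, Pi.single_apply]
  change fderiv ℝ (F ∘ φ) x (Pi.single i 1) = _
  rw [fderiv_comp x (differentiableAt_of_contDiff hF) hφx, ContinuousLinearMap.comp_apply,
    hexpand, map_sum]
  simp [_root_.pd, hcoord, mul_comm]

end PartialDerivatives

section VectorFields

variable {n : ℕ}

def derivAlong (X : (Fin n → ℝ) → Fin n → ℝ) (f : (Fin n → ℝ) → ℝ) (x : Fin n → ℝ) : ℝ :=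
  ∑ i, X x i * pd f i x

variable {X Y : (Fin n → ℝ) → Fin n → ℝ} {f f₁ f₂ : (Fin n → ℝ) → ℝ} {x : Fin n → ℝ}

theorem derivAlong_eq_sum_pd_mul : derivAlong X f x = ∑ i, pd f i x * X x i := by
  simp only [derivAlong, mul_comm]

theorem derivAlong_of_forall_eq (c : ℝ) (hf : ∀ y, f y = c) : derivAlong X f x = 0 := by
  simp [derivAlong, funext hf, pd_const]

theorem derivAlong_neg : derivAlong X (fun y => -f y) x = -derivAlong X f x := by
  simp [derivAlong, pd_neg]

theorem derivAlong_mul (hf₁ : Smooth f₁) (hf₂ : Smooth f₂) :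
    derivAlong X (fun y => f₁ y * f₂ y) x
      = derivAlong X f₁ x * f₂ x + f₁ x * derivAlong X f₂ x := by
  simp only [derivAlong, pd_mul hf₁ hf₂, mul_add, sum_add_distrib, sum_mul, mul_sum]
  congr 1 <;> exact sum_congr rfl fun _ _ => by ring

theorem derivAlong_sum {ι : Type*} {s : Finset ι} {F : ι → (Fin n → ℝ) → ℝ}
    (hF : ∀ a, Smooth (F a)) :
    derivAlong X (fun y => ∑ a ∈ s, F a y) x = ∑ a ∈ s, derivAlong X (F a) x := by
  simp only [derivAlong, pd_sum hF, mul_sum]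
  exact sum_comm

theorem bracket_apply_eq_derivAlong (k : Fin n) :
    bracket X Y x k = derivAlong X (fun y => Y y k) x - derivAlong Y (fun y => X y k) x := by
  simp [bracket, derivAlong]

theorem sum_mul_derivAlong_pd_comm (hf : Smooth f) :
    ∑ j, Y x j * derivAlong X (pd f j) x = ∑ j, X x j * derivAlong Y (pd f j) x := by
  simp only [derivAlong, mul_sum]
  rw [sum_comm]
  exact sum_congr rfl fun i _ => sum_congr rfl fun j _ => by rw [pd_pd_comm hf]; ring

theorem derivAlong_bracket (hX : SmoothVF X) (hY : SmoothVF Y) (hf : Smooth f) :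
    derivAlong (bracket X Y) f x
      = derivAlong X (derivAlong Y f) x - derivAlong Y (derivAlong X f) x := by
  have expand : ∀ V W : (Fin n → ℝ) → Fin n → ℝ, SmoothVF W → derivAlong V (derivAlong W f) x
      = ∑ j, (derivAlong V (fun y => W y j) x * pd f j x + W x j * derivAlong V (pd f j) x) :=
    fun V W hW => by
      change derivAlong _ (fun y => ∑ j, W y j * pd f j y) x = _
      rw [derivAlong_sum fun j => (hW j).mul (hf.pd j)]
      exact sum_congr rfl fun j _ => derivAlong_mul (hW j) (hf.pd j)
  rw [expand X Y hY, expand Y X hX, sum_add_distrib, sum_add_distrib, sum_mul_derivAlong_pd_comm hf]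
  simp only [derivAlong, bracket_apply_eq_derivAlong, sub_mul, sum_sub_distrib]
  ring

/-- `X` is `φ`-related to `Xb`: `dφ(X) = Xb ∘ φ`. -/
def IsRelated {m : ℕ} (φ : (Fin n → ℝ) → Fin m → ℝ) (X : (Fin n → ℝ) → Fin n → ℝ)
    (Xb : (Fin m → ℝ) → Fin m → ℝ) : Prop :=
  ∀ x α, derivAlong X (fun y => φ y α) x = Xb (φ x) α

theorem derivAlong_comp {m : ℕ} {F : (Fin m → ℝ) → ℝ} {φ : (Fin n → ℝ) → Fin m → ℝ}
    (hF : Smooth F) (hφ : ∀ α, Smooth fun y => φ y α) :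
    derivAlong X (fun y => F (φ y)) x = ∑ β, pd F β (φ x) * derivAlong X (fun y => φ y β) x := by
  simp only [derivAlong, pd_comp hF hφ, mul_sum]
  rw [sum_comm]
  exact sum_congr rfl fun _ _ => sum_congr rfl fun _ _ => by ring

theorem IsRelated.bracket {m : ℕ} {φ : (Fin n → ℝ) → Fin m → ℝ} {Xb Yb : (Fin m → ℝ) → Fin m → ℝ}
    (hφ : ∀ α, Smooth fun y => φ y α) (hX : SmoothVF X) (hY : SmoothVF Y)
    (hXb : SmoothVF Xb) (hYb : SmoothVF Yb) (hXXb : IsRelated φ X Xb) (hYYb : IsRelated φ Y Yb) :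
    IsRelated φ (bracket X Y) (bracket Xb Yb) := by
  intro x α
  rw [derivAlong_bracket hX hY (hφ α), funext (hYYb · α), funext (hXXb · α),
    derivAlong_comp (hYb α) hφ, derivAlong_comp (hXb α) hφ]
  simp only [hXXb x, hYYb x, _root_.bracket, sum_sub_distrib]
  exact congrArg₂ _ (sum_congr rfl fun _ _ => mul_comm _ _) (sum_congr rfl fun _ _ => mul_comm _ _)

@[simp]
theorem bracket_zero_left : bracket (0 : (Fin n → ℝ) → Fin n → ℝ) Y = 0 := by
  ext x k
  simp [_root_.bracket, pd_const]

end VectorFields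

section OneForms

variable {n : ℕ}

/-- A one-form is encoded by its components `ω j`; this is the function `ω(X)`. -/
def oneFormApply (ω : Fin n → (Fin n → ℝ) → ℝ) (X : (Fin n → ℝ) → Fin n → ℝ)
    (x : Fin n → ℝ) : ℝ :=
  ∑ j, ω j x * X x j

def extDerivCoeff (ω : Fin n → (Fin n → ℝ) → ℝ) (i j : Fin n) (x : Fin n → ℝ) : ℝ :=
  pd (ω j) i x - pd (ω i) j x

def extDerivApply (ω : Fin n → (Fin n → ℝ) → ℝ) (X Y : (Fin n → ℝ) → Fin n → ℝ)
    (x : Fin n → ℝ) : ℝ :=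
  ∑ i, ∑ j, X x i * Y x j * extDerivCoeff ω i j x

def interiorExtDeriv (U : (Fin n → ℝ) → Fin n → ℝ) (ω : Fin n → (Fin n → ℝ) → ℝ) (j : Fin n)
    (x : Fin n → ℝ) : ℝ :=
  ∑ k, U x k * extDerivCoeff ω k j x

variable {ω : Fin n → (Fin n → ℝ) → ℝ} {U X Y : (Fin n → ℝ) → Fin n → ℝ} {x : Fin n → ℝ}

theorem derivAlong_oneFormApply (hω : ∀ j, Smooth (ω j)) (hY : SmoothVF Y) :
    derivAlong X (oneFormApply ω Y) x
      = ∑ j, (derivAlong X (ω j) x * Y x j + ω j x * derivAlong X (fun y => Y y j) x) := by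
  unfold oneFormApply
  rw [derivAlong_sum fun j => (hω j).mul (hY j)]
  exact sum_congr rfl fun j _ => derivAlong_mul (hω j) (hY j)

theorem extDerivApply_eq (hω : ∀ j, Smooth (ω j)) (hX : SmoothVF X) (hY : SmoothVF Y) :
    extDerivApply ω X Y x = derivAlong X (oneFormApply ω Y) x
      - derivAlong Y (oneFormApply ω X) x - oneFormApply ω (bracket X Y) x := by
  have hXω : ∑ i, ∑ j, X x i * Y x j * pd (ω j) i x = ∑ j, derivAlong X (ω j) x * Y x j := by
    rw [sum_comm]
    simp only [derivAlong, sum_mul]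
    exact sum_congr rfl fun _ _ => sum_congr rfl fun _ _ => by ring
  have hYω : ∑ i, ∑ j, X x i * Y x j * pd (ω i) j x = ∑ i, derivAlong Y (ω i) x * X x i := by
    simp only [derivAlong, sum_mul]
    exact sum_congr rfl fun _ _ => sum_congr rfl fun _ _ => by ring
  rw [derivAlong_oneFormApply hω hY, derivAlong_oneFormApply hω hX]
  simp only [extDerivApply, extDerivCoeff, mul_sub, sum_sub_distrib, hXω, hYω, oneFormApply,
    bracket_apply_eq_derivAlong, sum_add_distrib]
  ring

theorem contDiff_extDerivCoeff (hω : ∀ j, Smooth (ω j)) (i j : Fin n) :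
    Smooth (extDerivCoeff ω i j) :=
  ((hω j).pd i).sub ((hω i).pd j)

theorem extDerivCoeff_swap (i j : Fin n) : extDerivCoeff ω j i x = -extDerivCoeff ω i j x := by
  simp [extDerivCoeff]

/-- `d(dω) = 0`, in components. -/
theorem pd_extDerivCoeff (hω : ∀ j, Smooth (ω j)) (i j k : Fin n) :
    pd (extDerivCoeff ω i j) k x
      = pd (extDerivCoeff ω k j) i x - pd (extDerivCoeff ω k i) j x := by
  unfold extDerivCoeff
  rw [pd_sub ((hω j).pd i) ((hω i).pd j), pd_sub ((hω j).pd k) ((hω k).pd j),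
    pd_sub ((hω i).pd k) ((hω k).pd i), pd_pd_comm (hω j) k i, pd_pd_comm (hω k) j i,
    pd_pd_comm (hω i) k j]
  ring

/-- Cartan's formula `L_U dω = d ι_U dω`, in components. -/
theorem extDerivCoeff_interiorExtDeriv (hU : SmoothVF U) (hω : ∀ j, Smooth (ω j)) (i j : Fin n) :
    extDerivCoeff (interiorExtDeriv U ω) i j x = derivAlong U (extDerivCoeff ω i j) x
      + ∑ k, pd (fun y => U y k) i x * extDerivCoeff ω k j x
      + ∑ k, pd (fun y => U y k) j x * extDerivCoeff ω i k x := by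
  have hpd : ∀ a b, pd (interiorExtDeriv U ω b) a x
      = ∑ k, (pd (fun y => U y k) a x * extDerivCoeff ω k b x
        + U x k * pd (extDerivCoeff ω k b) a x) := fun a b => by
    change pd (fun y => ∑ k, U y k * extDerivCoeff ω k b y) a x = _
    rw [pd_sum fun k => (hU k).mul (contDiff_extDerivCoeff hω k b)]
    exact sum_congr rfl fun k _ => pd_mul (hU k) (contDiff_extDerivCoeff hω k b)
  rw [extDerivCoeff, hpd, hpd, derivAlong, ← sum_sub_distrib, ← sum_add_distrib,
    ← sum_add_distrib]
  refine sum_congr rfl fun k _ => ?_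
  rw [pd_extDerivCoeff hω i j k, extDerivCoeff_swap k i]
  ring

theorem derivAlong_extDerivApply (hU : SmoothVF U) (hX : SmoothVF X) (hY : SmoothVF Y)
    (hω : ∀ j, Smooth (ω j)) :
    derivAlong U (extDerivApply ω X Y) x = extDerivApply (interiorExtDeriv U ω) X Y x
      + extDerivApply ω (bracket U X) Y x + extDerivApply ω X (bracket U Y) x := by
  have hA := contDiff_extDerivCoeff hω
  have hX' : ∀ k, Smooth fun y => X y k := hX
  have hY' : ∀ k, Smooth fun y => Y y k := hY
  have hLHS : derivAlong U (extDerivApply ω X Y) x = ∑ i, ∑ j,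
      ((derivAlong U (fun y => X y i) x * Y x j + X x i * derivAlong U (fun y => Y y j) x)
        * extDerivCoeff ω i j x + X x i * Y x j * derivAlong U (extDerivCoeff ω i j) x) := by
    change derivAlong U (fun y => ∑ i, ∑ j, X y i * Y y j * extDerivCoeff ω i j y) x = _
    rw [derivAlong_sum fun i => by fun_prop]
    refine sum_congr rfl fun i _ => ?_
    rw [derivAlong_sum fun j => by fun_prop]
    refine sum_congr rfl fun j _ => ?_
    rw [derivAlong_mul (by fun_prop) (hA i j), derivAlong_mul (hX' i) (hY' j)]
  have hXdU : ∑ i, ∑ j, X x i * Y x j * ∑ k, pd (fun y => U y k) i x * extDerivCoeff ω k j x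
      = ∑ i, ∑ j, derivAlong X (fun y => U y i) x * Y x j * extDerivCoeff ω i j x := by
    rw [sum_comm]
    conv_rhs => rw [sum_comm]
    refine sum_congr rfl fun j _ => ?_
    simp only [derivAlong, mul_sum, sum_mul]
    conv_rhs => rw [sum_comm]
    exact sum_congr rfl fun _ _ => sum_congr rfl fun _ _ => by ring
  have hYdU : ∑ i, ∑ j, X x i * Y x j * ∑ k, pd (fun y => U y k) j x * extDerivCoeff ω i k x
      = ∑ i, ∑ j, X x i * derivAlong Y (fun y => U y j) x * extDerivCoeff ω i j x := by
    refine sum_congr rfl fun i _ => ?_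
    simp only [derivAlong, mul_sum, sum_mul]
    conv_rhs => rw [sum_comm]
    exact sum_congr rfl fun _ _ => sum_congr rfl fun _ _ => by ring
  simp only [hLHS, extDerivApply, extDerivCoeff_interiorExtDeriv hU hω, bracket_apply_eq_derivAlong,
    mul_add, add_mul, sub_mul, mul_sub, sum_add_distrib, sum_sub_distrib]
  linear_combination -hXdU - hYdU

theorem extDerivApply_swap : extDerivApply ω X Y x = -extDerivApply ω Y X x := by
  simp only [extDerivApply, extDerivCoeff]
  rw [sum_comm, ← sum_neg_distrib]
  exact sum_congr rfl fun _ _ => by rw [← sum_neg_distrib]; exact sum_congr rfl fun _ _ => by ring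

theorem extDerivApply_smul_left {V : (Fin n → ℝ) → Fin n → ℝ} {c : ℝ} (hV : V x = c • U x) :
    extDerivApply ω V Y x = c * extDerivApply ω U Y x := by
  simp only [extDerivApply, hV, Pi.smul_apply, smul_eq_mul, mul_sum]
  exact sum_congr rfl fun _ _ => sum_congr rfl fun _ _ => by ring

theorem extDerivApply_smul_right {V : (Fin n → ℝ) → Fin n → ℝ} {c : ℝ} (hV : V x = c • U x) :
    extDerivApply ω X V x = c * extDerivApply ω X U x := by
  rw [extDerivApply_swap, extDerivApply_smul_left hV, extDerivApply_swap (X := X)]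
  ring

theorem extDerivApply_eq_neg_oneFormApply_bracket (hω : ∀ j, Smooth (ω j)) (hX : SmoothVF X)
    (hY : SmoothVF Y) {a b : ℝ} (hωX : ∀ y, oneFormApply ω X y = a)
    (hωY : ∀ y, oneFormApply ω Y y = b) :
    extDerivApply ω X Y x = -oneFormApply ω (bracket X Y) x := by
  rw [extDerivApply_eq hω hX hY, derivAlong_of_forall_eq b hωY, derivAlong_of_forall_eq a hωX]
  ring

theorem derivAlong_extDerivApply_of_bracket_eq_smul {X₁ X₂ : (Fin n → ℝ) → Fin n → ℝ}
    (hU : SmoothVF U) (hX₁ : SmoothVF X₁) (hX₂ : SmoothVF X₂) (hω : ∀ j, Smooth (ω j))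
    (h₁ : bracket U X₁ x = (-extDerivApply ω U X₁ x) • U x)
    (h₂ : bracket U X₂ x = (-extDerivApply ω U X₂ x) • U x) :
    derivAlong U (extDerivApply ω X₁ X₂) x = extDerivApply (interiorExtDeriv U ω) X₁ X₂ x := by
  rw [derivAlong_extDerivApply hU hX₁ hX₂ hω, extDerivApply_smul_left h₁,
    extDerivApply_smul_right h₂, extDerivApply_swap (X := X₁) (Y := U)]
  ring

end OneForms

theorem Matrix.exists_eq_smul_of_mulVec_eq_zero {K : Type*} [Field K] {m : ℕ}
    {P : Matrix (Fin m) (Fin (m + 1)) K} {Q : Matrix (Fin (m + 1)) (Fin (m + 1)) K}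
    (hPQ : IsUnit (P * Q * Pᵀ)) {u v : Fin (m + 1) → K} (hu : u ≠ 0) (hPu : P *ᵥ u = 0)
    (hPv : P *ᵥ v = 0) : ∃ c : K, v = c • u := by
  have hrank : P.rank = m := by
    refine le_antisymm (rank_le_height P) ?_
    have := rank_mul_le_left P (Q * Pᵀ)
    rwa [← Matrix.mul_assoc, rank_of_isUnit _ hPQ, Fintype.card_fin] at this
  have hker : Module.finrank K (LinearMap.ker P.mulVecLin) = 1 := by
    have := LinearMap.finrank_range_add_finrank_ker P.mulVecLin
    rw [← Matrix.rank, hrank, Module.finrank_fin_fun] at this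
    omega
  obtain ⟨c, hc⟩ := (finrank_eq_one_iff_of_nonzero' (⟨u, hPu⟩ : LinearMap.ker P.mulVecLin)
    (fun h => hu (congrArg Subtype.val h))).1 hker ⟨v, hPv⟩
  exact ⟨c, congrArg Subtype.val hc.symm⟩

section Submersion

variable {g : (Fin 3 → ℝ) → Matrix (Fin 3) (Fin 3) ℝ} {h : (Fin 2 → ℝ) → Matrix (Fin 2) (Fin 2) ℝ}
  {φ : (Fin 3 → ℝ) → Fin 2 → ℝ} {lam : (Fin 3 → ℝ) → ℝ} {U : (Fin 3 → ℝ) → Fin 3 → ℝ}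

def jacobian {n m : ℕ} (φ : (Fin n → ℝ) → Fin m → ℝ) (x : Fin n → ℝ) :
    Matrix (Fin m) (Fin n) ℝ :=
  Matrix.of fun α i => pd (fun y => φ y α) i x

theorem jacobian_mulVec {n m : ℕ} (φ : (Fin n → ℝ) → Fin m → ℝ) (X : (Fin n → ℝ) → Fin n → ℝ)
    (x : Fin n → ℝ) : jacobian φ x *ᵥ X x = fun α => derivAlong X (fun y => φ y α) x := by
  ext α
  simp [jacobian, mulVec, dotProduct, derivAlong_eq_sum_pd_mul]

theorem jacobian_mulVec_eq_zero {n m : ℕ} {φ : (Fin n → ℝ) → Fin m → ℝ}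
    {X : (Fin n → ℝ) → Fin n → ℝ} (hX : IsRelated φ X 0) (x : Fin n → ℝ) :
    jacobian φ x *ᵥ X x = 0 := by
  rw [jacobian_mulVec]
  exact funext (hX x)

theorem SemiConformal.jacobian_mul_mul_transpose (hsc : SemiConformal g h φ lam) (x : Fin 3 → ℝ) :
    jacobian φ x * ginv g x * (jacobian φ x)ᵀ = lam x ^ 2 • ginv h (φ x) := by
  ext α β
  rw [Matrix.smul_apply, smul_eq_mul, ← hsc x α β]
  simp only [mul_apply, jacobian, transpose_apply, of_apply, sum_mul]
  rw [sum_comm]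
  exact sum_congr rfl fun _ _ => sum_congr rfl fun _ _ => by ring

theorem eq_smul_of_jacobian_mulVec_eq_zero (hh : IsMetric h) (hlampos : ∀ x, 0 < lam x)
    (hsc : SemiConformal g h φ lam) (hUvert : Vertical φ U) (hUunit : UnitField g U)
    {x : Fin 3 → ℝ} {V : Fin 3 → ℝ} (hV : jacobian φ x *ᵥ V = 0) :
    V = (∑ i, ∑ j, g x i j * V i * U x j) • U x := by
  have hunit : IsUnit (jacobian φ x * ginv g x * (jacobian φ x)ᵀ) := by
    rw [hsc.jacobian_mul_mul_transpose]
    simpa [ginv, Units.smul_def] using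
      (Matrix.isUnit_nonsing_inv_iff.2 (hh.2 (φ x)).2.isUnit).smul
        (Units.mk0 _ (pow_ne_zero 2 (hlampos x).ne'))
  have hUx : U x ≠ 0 := fun h0 => by simpa [h0] using hUunit x
  obtain ⟨c, rfl⟩ := exists_eq_smul_of_mulVec_eq_zero hunit hUx (funext (hUvert x)) hV
  have hpair : ∑ i, ∑ j, g x i j * (c • U x) i * U x j = c * ∑ i, ∑ j, g x i j * U x i * U x j := by
    simp only [Pi.smul_apply, smul_eq_mul, mul_sum]
    exact sum_congr rfl fun _ _ => sum_congr rfl fun _ _ => by ring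
  rw [hpair, hUunit x, mul_one]

theorem Vertical.isRelated_zero (hUvert : Vertical φ U) : IsRelated φ U 0 :=
  fun x α => derivAlong_eq_sum_pd_mul.trans (hUvert x α)

theorem bracket_eq_smul_of_isRelated (hh : IsMetric h) (hlampos : ∀ x, 0 < lam x)
    (hsc : SemiConformal g h φ lam) (hφ : ∀ α, Smooth fun y => φ y α) (hU : SmoothVF U)
    (hUvert : Vertical φ U) (hUunit : UnitField g U) {X : (Fin 3 → ℝ) → Fin 3 → ℝ}
    {Xb : (Fin 2 → ℝ) → Fin 2 → ℝ} (hX : SmoothVF X) (hXb : SmoothVF Xb)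
    (hXXb : IsRelated φ X Xb) (x : Fin 3 → ℝ) :
    bracket U X x = (∑ i, ∑ j, g x i j * bracket U X x i * U x j) • U x := by
  refine eq_smul_of_jacobian_mulVec_eq_zero hh hlampos hsc hUvert hUunit
    (jacobian_mulVec_eq_zero ?_ x)
  have := hUvert.isRelated_zero.bracket (Xb := 0) hφ hU hX (fun _ => contDiff_const) hXb hXXb
  rwa [bracket_zero_left] at this

theorem Hproj_eq_zero_of_eq_smul {V : (Fin 3 → ℝ) → Fin 3 → ℝ} {x : Fin 3 → ℝ}
    (hV : V x = (∑ i, ∑ j, g x i j * V x i * U x j) • U x) (k : Fin 3) : Hproj g U V x k = 0 := by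
  rw [Hproj, sub_eq_zero, ← smul_eq_mul, ← Pi.smul_apply, ← hV]

end Submersion

theorem sum_mul_christoffel {n : ℕ} {g : (Fin n → ℝ) → Matrix (Fin n) (Fin n) ℝ} (hg : IsMetric g)
    (x : Fin n → ℝ) (m a b : Fin n) :
    ∑ k, g x m k * christoffel g k a b x = (1 / 2) * (pd (fun y => g y m b) a x
      + pd (fun y => g y m a) b x - pd (fun y => g y a b) m x) := by
  set S : Fin n → ℝ := fun l =>
    pd (fun y => g y l b) a x + pd (fun y => g y l a) b x - pd (fun y => g y a b) l x
  have hS : (g x *ᵥ ((g x)⁻¹ *ᵥ S)) m = S m := by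
    rw [mulVec_mulVec, mul_nonsing_inv _ ((isUnit_iff_isUnit_det _).1 (hg.2 x).2.isUnit),
      one_mulVec]
  simp only [mulVec, dotProduct] at hS
  calc ∑ k, g x m k * christoffel g k a b x
      = (1 / 2) * ∑ k, g x m k * ∑ l, (g x)⁻¹ k l * S l := by
        simp only [christoffel, ginv, mul_sum]
        exact sum_congr rfl fun _ _ => sum_congr rfl fun _ _ => by ring
    _ = (1 / 2) * S m := by rw [hS]

section FlatForms

variable {g : (Fin 3 → ℝ) → Matrix (Fin 3) (Fin 3) ℝ} {U : (Fin 3 → ℝ) → Fin 3 → ℝ}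

theorem IsMetric.contDiff_flat (hg : IsMetric g) (hU : SmoothVF U) (j : Fin 3) :
    Smooth (flat g U j) :=
  ContDiff.sum fun k _ => (hg.1 j k).mul (hU k)

theorem oneFormApply_flat (V : (Fin 3 → ℝ) → Fin 3 → ℝ) (x : Fin 3 → ℝ) :
    oneFormApply (flat g U) V x = ∑ i, ∑ j, g x i j * V x i * U x j := by
  simp only [oneFormApply, flat, sum_mul]
  exact sum_congr rfl fun _ _ => sum_congr rfl fun _ _ => by ring

theorem IsMetric.oneFormApply_flat_eq (hg : IsMetric g) (V : (Fin 3 → ℝ) → Fin 3 → ℝ)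
    (x : Fin 3 → ℝ) : oneFormApply (flat g U) V x = ∑ i, ∑ j, g x i j * U x i * V x j := by
  rw [oneFormApply_flat, sum_comm]
  exact sum_congr rfl fun i _ => sum_congr rfl fun j _ => by rw [(hg.2 x).1.apply j i]; ring

theorem flat_meanCurv (hg : IsMetric g) (hU : SmoothVF U) (hUunit : UnitField g U) :
    flat g (meanCurv g U) = interiorExtDeriv U (flat g U) := by
  have hg' : ∀ a b, Smooth fun y => g y a b := hg.1
  have hU' : ∀ k, Smooth fun y => U y k := hU
  funext j x
  have hcov : flat g (meanCurv g U) j x = ∑ k, g x j k * derivAlong U (fun y => U y k) x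
      + ∑ a, ∑ b, U x a * U x b * ((1 / 2) * (pd (fun y => g y j b) a x
        + pd (fun y => g y j a) b x - pd (fun y => g y a b) j x)) := by
    simp only [flat, meanCurv, covD, derivAlong, mul_add, sum_add_distrib,
      ← sum_mul_christoffel hg, mul_sum]
    congr 1
    rw [sum_comm]
    refine sum_congr rfl fun a _ => ?_
    rw [sum_comm]
    exact sum_congr rfl fun b _ => sum_congr rfl fun k _ => by ring
  have hunit : pd (fun y => ∑ a, ∑ b, g y a b * U y a * U y b) j x = 0 := by
    rw [funext hUunit, pd_const]
  have hsymm : ∀ y a b, g y b a = g y a b := fun y a b => (hg.2 y).1.apply a b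
  have hsymm' : ∀ a b, (fun y => g y b a) = fun y => g y a b := fun a b => funext (hsymm · a b)
  rw [hcov]
  simp only [interiorExtDeriv, extDerivCoeff, derivAlong]
  unfold flat
  simp (disch := fun_prop) only [Fin.sum_univ_three, pd_add, pd_mul] at hunit ⊢
  simp only [hsymm' 1 0, hsymm' 2 0, hsymm' 2 1, hsymm x 1 0, hsymm x 2 0, hsymm x 2 1] at hunit ⊢
  linear_combination (1 / 2) * hunit

theorem bracket_eq_neg_extDerivApply_smul (hg : IsMetric g) (hU : SmoothVF U)
    (hUunit : UnitField g U) {X : (Fin 3 → ℝ) → Fin 3 → ℝ} (hX : SmoothVF X)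
    (hXU : ∀ y, ∑ i, ∑ j, g y i j * X y i * U y j = 0) {x : Fin 3 → ℝ}
    (hB : bracket U X x = (∑ i, ∑ j, g x i j * bracket U X x i * U x j) • U x) :
    bracket U X x = (-extDerivApply (flat g U) U X x) • U x := by
  rwa [extDerivApply_eq_neg_oneFormApply_bracket (hg.contDiff_flat hU) hU hX
    (fun y => (oneFormApply_flat U y).trans (hUunit y))
    (fun y => (oneFormApply_flat X y).trans (hXU y)), neg_neg, oneFormApply_flat]

theorem metric_bracket_eq_neg_extDerivApply (hg : IsMetric g) (hU : SmoothVF U)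
    {X Y : (Fin 3 → ℝ) → Fin 3 → ℝ} (hX : SmoothVF X) (hY : SmoothVF Y)
    (hXU : ∀ y, ∑ i, ∑ j, g y i j * X y i * U y j = 0)
    (hYU : ∀ y, ∑ i, ∑ j, g y i j * Y y i * U y j = 0) (x : Fin 3 → ℝ) :
    ∑ i, ∑ j, g x i j * U x i * bracket X Y x j = -extDerivApply (flat g U) X Y x := by
  rw [extDerivApply_eq_neg_oneFormApply_bracket (hg.contDiff_flat hU) hX hY
    (fun y => (oneFormApply_flat X y).trans (hXU y))
    (fun y => (oneFormApply_flat Y y).trans (hYU y)), neg_neg, hg.oneFormApply_flat_eq]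

end FlatForms

theorem horizontal_lift_bracket_lemma_general
    (g : (Fin 3 → ℝ) → Matrix (Fin 3) (Fin 3) ℝ)
    (h : (Fin 2 → ℝ) → Matrix (Fin 2) (Fin 2) ℝ)
    (φ : (Fin 3 → ℝ) → Fin 2 → ℝ) (lam : (Fin 3 → ℝ) → ℝ)
    (U X₁ X₂ : (Fin 3 → ℝ) → Fin 3 → ℝ)
    (Xb₁ Xb₂ : (Fin 2 → ℝ) → Fin 2 → ℝ)
    (hg : IsMetric g) (hh : IsMetric h)
    (hφ : ∀ α, ContDiff ℝ (⊤ : ℕ∞) fun x => φ x α)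
    (hlampos : ∀ x, 0 < lam x)
    (hsc : SemiConformal g h φ lam)
    (hU : SmoothVF U) (hUvert : Vertical φ U) (hUunit : UnitField g U)
    (hX₁ : SmoothVF X₁) (hX₂ : SmoothVF X₂)
    (hXb₁ : ∀ α, ContDiff ℝ (⊤ : ℕ∞) fun y => Xb₁ y α)
    (hXb₂ : ∀ α, ContDiff ℝ (⊤ : ℕ∞) fun y => Xb₂ y α)
    -- `X₁, X₂` are the horizontal lifts: `dφ(X_a) = X̄_a ∘ φ` and `X_a ⊥ ker dφ`
    (hlift₁ : ∀ x α, (∑ i, pd (fun y => φ y α) i x * X₁ x i) = Xb₁ (φ x) α)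
    (hlift₂ : ∀ x α, (∑ i, pd (fun y => φ y α) i x * X₂ x i) = Xb₂ (φ x) α)
    (hhor₁ : ∀ x, (∑ i, ∑ j, g x i j * X₁ x i * U x j) = 0)
    (hhor₂ : ∀ x, (∑ i, ∑ j, g x i j * X₂ x i * U x j) = 0) :
    (∀ x k, Hproj g U (bracket U X₁) x k = 0) ∧
    (∀ x k, Hproj g U (bracket U X₂) x k = 0) ∧
    (∀ x, (∑ k, U x k *
        pd (fun y => ∑ i, ∑ j, g y i j * U y i * bracket X₁ X₂ y j) k x) =
      -(∑ i, ∑ j, X₁ x i * X₂ x j *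
          (pd (fun y => flat g (meanCurv g U) j y) i x
            - pd (fun y => flat g (meanCurv g U) i y) j x))) := by
  have hB₁ := bracket_eq_smul_of_isRelated hh hlampos hsc hφ hU hUvert hUunit hX₁ hXb₁
    fun x α => derivAlong_eq_sum_pd_mul.trans (hlift₁ x α)
  have hB₂ := bracket_eq_smul_of_isRelated hh hlampos hsc hφ hU hUvert hUunit hX₂ hXb₂
    fun x α => derivAlong_eq_sum_pd_mul.trans (hlift₂ x α)
  refine ⟨fun x => Hproj_eq_zero_of_eq_smul (hB₁ x), fun x => Hproj_eq_zero_of_eq_smul (hB₂ x),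
    fun x => ?_⟩
  change derivAlong U _ x = -extDerivApply (flat g (meanCurv g U)) X₁ X₂ x
  rw [funext (metric_bracket_eq_neg_extDerivApply hg hU hX₁ hX₂ hhor₁ hhor₂), derivAlong_neg,
    derivAlong_extDerivApply_of_bracket_eq_smul hU hX₁ hX₂ (hg.contDiff_flat hU)
      (bracket_eq_neg_extDerivApply_smul hg hU hUunit hX₁ hhor₁ (hB₁ x))
      (bracket_eq_neg_extDerivApply_smul hg hU hUunit hX₂ hhor₂ (hB₂ x)),
    flat_meanCurv hg hU hUunit]

/-- If `X₁, X₂` are horizontal lifts of unit vector fields `X̄₁, X̄₂` on `N`,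
then (i) `H[U, X_a] = 0`, and (ii) `U(g(U,[X₁,X₂])) = −dμ♭(X₁,X₂)`. -/
theorem horizontal_lift_bracket_lemma
    (g : (Fin 3 → ℝ) → Matrix (Fin 3) (Fin 3) ℝ)
    (h : (Fin 2 → ℝ) → Matrix (Fin 2) (Fin 2) ℝ)
    (φ : (Fin 3 → ℝ) → Fin 2 → ℝ) (lam : (Fin 3 → ℝ) → ℝ)
    (U X₁ X₂ : (Fin 3 → ℝ) → Fin 3 → ℝ)
    (Xb₁ Xb₂ : (Fin 2 → ℝ) → Fin 2 → ℝ)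
    (hg : IsMetric g) (hh : IsMetric h)
    (hφ : ∀ α, ContDiff ℝ (⊤ : ℕ∞) fun x => φ x α)
    (hlam : ContDiff ℝ (⊤ : ℕ∞) lam) (hlampos : ∀ x, 0 < lam x)
    (hsc : SemiConformal g h φ lam)
    (hU : SmoothVF U) (hUvert : Vertical φ U) (hUunit : UnitField g U)
    (hX₁ : SmoothVF X₁) (hX₂ : SmoothVF X₂)
    (hXb₁ : ∀ α, ContDiff ℝ (⊤ : ℕ∞) fun y => Xb₁ y α)
    (hXb₂ : ∀ α, ContDiff ℝ (⊤ : ℕ∞) fun y => Xb₂ y α)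
    -- `X̄₁, X̄₂` are unit vector fields on `N`
    (hunit₁ : ∀ y, (∑ α, ∑ β, h y α β * Xb₁ y α * Xb₁ y β) = 1)
    (hunit₂ : ∀ y, (∑ α, ∑ β, h y α β * Xb₂ y α * Xb₂ y β) = 1)
    -- `X₁, X₂` are the horizontal lifts: `dφ(X_a) = X̄_a ∘ φ` and `X_a ⊥ ker dφ`
    (hlift₁ : ∀ x α, (∑ i, pd (fun y => φ y α) i x * X₁ x i) = Xb₁ (φ x) α)
    (hlift₂ : ∀ x α, (∑ i, pd (fun y => φ y α) i x * X₂ x i) = Xb₂ (φ x) α)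
    (hhor₁ : ∀ x, (∑ i, ∑ j, g x i j * X₁ x i * U x j) = 0)
    (hhor₂ : ∀ x, (∑ i, ∑ j, g x i j * X₂ x i * U x j) = 0) :
    (∀ x k, Hproj g U (bracket U X₁) x k = 0) ∧
    (∀ x k, Hproj g U (bracket U X₂) x k = 0) ∧
    (∀ x, (∑ k, U x k *
        pd (fun y => ∑ i, ∑ j, g y i j * U y i * bracket X₁ X₂ y j) k x) =
      -(∑ i, ∑ j, X₁ x i * X₂ x j *
          (pd (fun y => flat g (meanCurv g U) j y) i x
            - pd (fun y => flat g (meanCurv g U) i y) j x))) :=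
  horizontal_lift_bracket_lemma_general g h φ lam U X₁ X₂ Xb₁ Xb₂ hg hh hφ hlampos hsc hU hUvert
    hUunit hX₁ hX₂ hXb₁ hXb₂ hlift₁ hlift₂ hhor₁ hhor₂
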